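/- Let B ∈ ℝ^{n×m} have full column rank m, let Q ∈ ℝ^{N×N} be negative definite, S ∈ ℝ^{N×m}, R ∈ ℝ^{m×m}, and let V ∈ ℝ^{n×N}. Suppose V Q V^⊤ + V S B^⊤ + B S^⊤ V^⊤ + B R B^⊤ ⪰ 0. Then there exists W ∈ ℝ^{m×N} with V = B W. Moreover, this W satisfies W Q W^⊤ + W S + S^⊤ W^⊤ + R ⪰ 0. -/

import Mathlib

open Matrix

/-!
Let `C` be a left inverse of `B` and `E = 1 - B C`, so that `E B = 0` and `C B = 1`. Conjugating
the hypothesis by `E` kills every term containing `B` and leaves `(E V) Q (E V)ᵀ ⪰ 0`, which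
forces `E V = 0` because `Q ≺ 0`; hence `V = B W` with `W = C V`. Conjugating by `C` instead turns
the hypothesis into the claimed inequality for `W`.
-/

namespace Matrix

variable {ι κ : Type*} [Fintype ι] [Fintype κ]

theorem exists_mul_eq_one_of_mulVec_eq_zero {K : Type*} [Field K] [DecidableEq κ]
    (B : Matrix ι κ K) (hB : ∀ v, B *ᵥ v = 0 → v = 0) : ∃ C : Matrix κ ι K, C * B = 1 := by
  obtain ⟨g, hg⟩ := (toLin' B).exists_leftInverse_of_injective <| LinearMap.ker_eq_bot'.mpr hB
  classical
  refine ⟨LinearMap.toMatrix' g, ?_⟩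
  rw [← LinearMap.toMatrix'_toLin' B, ← LinearMap.toMatrix'_comp, hg, LinearMap.toMatrix'_id]

theorem dotProduct_mul_mul_transpose_mulVec {R : Type*} [CommRing R] {ν : Type*} [Fintype ν]
    (X : Matrix ι ν R) (Q : Matrix ν ν R) (v : ι → R) :
    v ⬝ᵥ (X * Q * Xᵀ) *ᵥ v = Xᵀ *ᵥ v ⬝ᵥ Q *ᵥ (Xᵀ *ᵥ v) := by
  rw [← mulVec_mulVec, ← mulVec_mulVec, dotProduct_mulVec, mulVec_transpose]

theorem eq_zero_of_posSemidef_mul_mul_transpose {Q : Matrix κ κ ℝ} (hQ : (-Q).PosDef)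
    {X : Matrix ι κ ℝ} (hX : (X * Q * Xᵀ).PosSemidef) : X = 0 := by
  classical
  suffices h : ∀ v, Xᵀ *ᵥ v = 0 by
    simpa using congrArg transpose <|
      ext_of_mulVec_single (M := Xᵀ) (N := 0) fun i => by rw [h, zero_mulVec]
  intro v
  by_contra hv
  have hneg : 0 < -(Xᵀ *ᵥ v ⬝ᵥ Q *ᵥ (Xᵀ *ᵥ v)) := by
    simpa [neg_mulVec] using hQ.dotProduct_mulVec_pos hv
  have hnonneg : 0 ≤ Xᵀ *ᵥ v ⬝ᵥ Q *ᵥ (Xᵀ *ᵥ v) := by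
    simpa [dotProduct_mul_mul_transpose_mulVec] using hX.dotProduct_mulVec_nonneg v
  linarith

theorem PosSemidef.mul_quadratic_mul_transpose {ν μ : Type*} [Fintype ν] [Fintype μ]
    {X : Matrix ι ν ℝ} {Y : Matrix ι κ ℝ} {Q : Matrix ν ν ℝ} {S : Matrix ν κ ℝ} {P : Matrix κ κ ℝ}
    (h : (X * Q * Xᵀ + X * (S * Yᵀ) + (Y * Sᵀ) * Xᵀ + Y * P * Yᵀ).PosSemidef)
    (T : Matrix μ ι ℝ) :
    ((T * X) * Q * (T * X)ᵀ + (T * X) * (S * (T * Y)ᵀ) + ((T * Y) * Sᵀ) * (T * X)ᵀ +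
      (T * Y) * P * (T * Y)ᵀ).PosSemidef := by
  convert h.mul_mul_conjTranspose_same T using 1
  simp only [conjTranspose_eq_transpose_of_trivial, Matrix.mul_add, Matrix.add_mul,
    transpose_mul, Matrix.mul_assoc]

end Matrix

/-- direction (ii) of the set-equivalence theorem. If `B` has full column
rank, `Q ≺ 0`, and `V Q Vᵀ + V S Bᵀ + B Sᵀ Vᵀ + B R Bᵀ ⪰ 0`, then `V = B W` for some
`W` satisfying the quadratic bound `W Q Wᵀ + W S + Sᵀ Wᵀ + R ⪰ 0`. -/
theorem stmt1 {n m N : ℕ}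
    (B : Matrix (Fin n) (Fin m) ℝ)
    (hB : ∀ v : Fin m → ℝ, B.mulVec v = 0 → v = 0)
    (Q : Matrix (Fin N) (Fin N) ℝ) (hQ : (-Q).PosDef)
    (S : Matrix (Fin N) (Fin m) ℝ) (R : Matrix (Fin m) (Fin m) ℝ)
    (V : Matrix (Fin n) (Fin N) ℝ)
    (hbound : (V * Q * Vᵀ + V * (S * Bᵀ) + (B * Sᵀ) * Vᵀ + B * R * Bᵀ).PosSemidef) :
    ∃ W : Matrix (Fin m) (Fin N) ℝ,
      V = B * W ∧ (W * Q * Wᵀ + W * S + Sᵀ * Wᵀ + R).PosSemidef := by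
  obtain ⟨C, hCB⟩ := exists_mul_eq_one_of_mulVec_eq_zero B hB
  have hEB : (1 - B * C) * B = 0 := by rw [Matrix.sub_mul, Matrix.mul_assoc, hCB]; simp
  have hEV : (1 - B * C) * V = 0 := by
    have hE := hbound.mul_quadratic_mul_transpose (1 - B * C)
    rw [hEB] at hE
    exact eq_zero_of_posSemidef_mul_mul_transpose hQ (by simpa using hE)
  refine ⟨C * V, ?_, ?_⟩
  · rw [Matrix.sub_mul, sub_eq_zero, Matrix.one_mul] at hEV
    rw [← Matrix.mul_assoc, ← hEV]
  · simpa only [hCB, transpose_one, Matrix.one_mul, Matrix.mul_one] using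
      hbound.mul_quadratic_mul_transpose C
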